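/- Let γ be an elliptic Möbius transformation of ℍ with fixed point v and rotation angle θ. Then for every z ∈ ℍ, sinh(ρ(z, γz)/2) = sinh(ρ(z, v)) · |sin(θ/2)|. -/

import Mathlib

/-!
Conjugating by `g` moves `v` to `i` and `γ` to the rotation `R`, and `ρ` is `SL(2,ℝ)`-invariant,
so it suffices to treat `R` and the point `i`. For `g = [[a, b], [c, d]]` one has
`z - g z = (c z² + (d - a) z - b) / (c z + d)` and `Im (g z) = Im z / |c z + d|²`, whence
`sinh (ρ(z, g z) / 2) = |c z² + (d - a) z - b| / (2 Im z)`. For the rotation the polynomial is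
`-sin(θ/2) (z² + 1)`, and `|z² + 1| / (2 Im z) = sinh ρ(z, i)` by the double-angle formula for `sinh`.
-/

open Matrix UpperHalfPlane Real

abbrev SL2R := Matrix.SpecialLinearGroup (Fin 2) ℝ

/-- `γ` is an elliptic Möbius transformation with fixed point `v` and rotation angle `θ`:
it fixes `v` and, when conjugated by an element of PSL(2,ℝ) sending `v` to `i`, it acts
as the rotation by `θ` about `i`, represented by the matrix
`[[cos(θ/2), sin(θ/2)], [-sin(θ/2), cos(θ/2)]]`. -/
def HasRotation (γ : SL2R) (v : UpperHalfPlane) (θ : ℝ) : Prop :=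
  γ • v = v ∧
  ∃ g R : SL2R, g • v = UpperHalfPlane.I ∧
    (R : Matrix (Fin 2) (Fin 2) ℝ) =
      !![Real.cos (θ / 2), Real.sin (θ / 2); -Real.sin (θ / 2), Real.cos (θ / 2)] ∧
    ∀ z : UpperHalfPlane, (g * γ * g⁻¹) • z = R • z

namespace UpperHalfPlane

theorem sinh_half_dist_smul_self (g : SL2R) (z : ℍ) :
    sinh (dist z (g • z) / 2) =
      ‖(g 1 0 : ℂ) * (z : ℂ) ^ 2 + (g 1 1 - g 0 0 : ℝ) * z - g 0 1‖ / (2 * z.im) := by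
  set D : ℂ := g 1 0 * z + g 1 1
  have hD : D ≠ 0 := by simpa [denom] using denom_ne_zero (SpecialLinearGroup.mapGL ℝ g) z
  have hcoe : ((g • z : ℍ) : ℂ) = (g 0 0 * z + g 0 1) / D := by
    simp [coe_specialLinearGroup_apply, D]
  have him : (g • z).im = z.im / ‖D‖ ^ 2 := by
    rw [show g • z = SpecialLinearGroup.mapGL ℝ g • z from rfl, im_smul_eq_div_normSq,
      Complex.sq_norm]
    simp [denom, D]
  have hsub : (z : ℂ) - (g • z : ℍ) =
      ((g 1 0 : ℂ) * (z : ℂ) ^ 2 + (g 1 1 - g 0 0 : ℝ) * z - g 0 1) / D := by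
    rw [hcoe, eq_div_iff hD, sub_mul, div_mul_cancel₀ _ hD]
    push_cast
    ring
  have hsqrt : √(z.im * (g • z).im) = z.im / ‖D‖ := by
    rw [him, ← mul_div_assoc, ← sq, ← div_pow, Real.sqrt_sq (by positivity)]
  rw [sinh_half_dist, Complex.dist_eq, hsub, hsqrt, norm_div]
  have hD_pos : 0 < ‖D‖ := norm_pos_iff.2 hD
  field_simp

theorem sinh_dist_I (z : ℍ) : sinh (dist z I) = ‖(z : ℂ) ^ 2 + 1‖ / (2 * z.im) := by
  have hsq : ‖(z : ℂ) ^ 2 + 1‖ = dist (z : ℂ) I * dist (z : ℂ) (starRingEnd ℂ I) := by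
    rw [Complex.dist_eq, Complex.dist_eq, ← norm_mul, coe_I, Complex.conj_I]
    congr 1
    linear_combination Complex.I_sq
  rw [show dist z I = 2 * (dist z I / 2) by ring, sinh_two_mul, sinh_half_dist, cosh_half_dist,
    I_im, mul_one, hsq]
  have him_pos := z.im_pos
  field_simp
  rw [Real.sq_sqrt him_pos.le]
  ring

theorem sinh_half_dist_rotation_smul_self (θ : ℝ) (R : SL2R)
    (hR : (R : Matrix (Fin 2) (Fin 2) ℝ) = !![cos (θ / 2), sin (θ / 2); -sin (θ / 2), cos (θ / 2)])
    (z : ℍ) : sinh (dist z (R • z) / 2) = sinh (dist z I) * |sin (θ / 2)| := by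
  have hpoly : (R 1 0 : ℂ) * (z : ℂ) ^ 2 + (R 1 1 - R 0 0 : ℝ) * z - R 0 1 =
      -(sin (θ / 2) : ℂ) * ((z : ℂ) ^ 2 + 1) := by
    simp only [hR, of_apply, cons_val', cons_val_zero, cons_val_one, empty_val', cons_val_fin_one,
      sub_self, Complex.ofReal_zero, Complex.ofReal_neg]
    ring
  rw [sinh_half_dist_smul_self, hpoly, sinh_dist_I, norm_mul, norm_neg, Complex.norm_real,
    Real.norm_eq_abs]
  ring

end UpperHalfPlane

/-- If γ is elliptic with fixed point v and rotation angle θ, then for every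
z ∈ ℍ, sinh(ρ(z,γz)/2) = sinh(ρ(z,v))·|sin(θ/2)|. -/
theorem stmt7 (γ : SL2R) (v : UpperHalfPlane) (θ : ℝ) (hγ : HasRotation γ v θ) :
    ∀ z : UpperHalfPlane,
      Real.sinh (dist z (γ • z) / 2) = Real.sinh (dist z v) * |Real.sin (θ / 2)| := by
  obtain ⟨-, g, R, hgv, hR, hconj⟩ := hγ
  intro z
  have hdist_γ : dist z (γ • z) = dist (g • z) (R • g • z) := by
    rw [← hconj, smul_smul, inv_mul_cancel_right, ← smul_smul, dist_smul]
  have hdist_v : dist z v = dist (g • z) I := by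
    rw [← hgv, dist_smul]
  rw [hdist_γ, hdist_v, sinh_half_dist_rotation_smul_self θ R hR]
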